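/- arXiv:2311.16077 — 5 statements merged into one kernel-verified Lean document; each statement's English description precedes it below -/
import Mathlib

section
/- For any smooth symmetric matrix field U : R^3 → Sym(3), tr(inc(S⁻¹ U)) = -divdiv(U), where inc(V) := curl(S⁻¹ curl V) with row-wise curl, S(V) = Vᵀ - tr(V) I, and divdiv(U) := ∇·U·∇ = Σ_{i,j} ∂_i ∂_j U_{ij}. -/
open Matrix MeasureTheory

noncomputable section

abbrev V3 : Type := Fin 3 → ℝ
abbrev M3 : Type := Matrix (Fin 3) (Fin 3) ℝ

/-- `mskw a` is the skew-symmetric matrix with `mskw a *ᵥ b = a ×₃ b`. -/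
def mskw (a : V3) : M3 :=
  !![0, -a 2, a 1; a 2, 0, -a 0; -a 1, a 0, 0]

/-- Partial derivative `∂_j f` at `x`. -/
def pd (j : Fin 3) (f : V3 → ℝ) (x : V3) : ℝ :=
  fderiv ℝ f x (Pi.single j 1)

/-- Curl of a vector field. -/
def curlVec (v : V3 → V3) (x : V3) : V3 :=
  ![pd 1 (fun y => v y 2) x - pd 2 (fun y => v y 1) x,
    pd 2 (fun y => v y 0) x - pd 0 (fun y => v y 2) x,
    pd 0 (fun y => v y 1) x - pd 1 (fun y => v y 0) x]

/-- Row-wise curl of a matrix field. -/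
def curlMat (U : V3 → M3) (x : V3) : M3 :=
  Matrix.of fun i j => curlVec (fun y => U y i) x j

/-- `S U = Uᵀ - tr U • I`. -/
def Smap (U : M3) : M3 := Uᵀ - U.trace • (1 : M3)

/-- `S⁻¹ U = Uᵀ - (1/2) tr U • I`. -/
def Sinv (U : M3) : M3 := Uᵀ - ((2:ℝ)⁻¹ * U.trace) • (1 : M3)

/-- Symmetric part. -/
def symPart (U : M3) : M3 := (2:ℝ)⁻¹ • (U + Uᵀ)

/-- Deviatoric (trace-free) part. -/
def devPart (U : M3) : M3 := U - ((3:ℝ)⁻¹ * U.trace) • (1 : M3)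

/-- Row-wise gradient of a vector field: `(grad v)_{ij} = ∂_j v_i`. -/
def gradMat (v : V3 → V3) (x : V3) : M3 :=
  Matrix.of fun i j => pd j (fun y => v y i) x

/-- Symmetric gradient `def v`. -/
def defSym (v : V3 → V3) (x : V3) : M3 := symPart (gradMat v x)

/-- Incompatibility operator `inc U = curl S⁻¹ curl U`. -/
def incMat (U : V3 → M3) (x : V3) : M3 :=
  curlMat (fun y => Sinv (curlMat U y)) x

/-- Linearized Cotton–York operator `cinc U = curl S⁻¹ curl S⁻¹ curl U`. -/
def cincMat (U : V3 → M3) (x : V3) : M3 :=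
  curlMat (fun y => Sinv (incMat U y)) x

/-- `divdiv U = Σ_{ij} ∂_i ∂_j U_{ij}`. -/
def divdiv (U : V3 → M3) (x : V3) : ℝ :=
  ∑ i, ∑ j, pd i (fun y => pd j (fun z => U z i j) y) x

/-- Conformal Killing field `(x·x)a - 2(a·x)x + b×x + cx + d`. -/
def CKfield (a b d : V3) (c : ℝ) : V3 → V3 :=
  fun x => (x ⬝ᵥ x) • a - (2 * (a ⬝ᵥ x)) • x + crossProduct b x + c • x + d

/-- Entry `(def u)_{ij}` of the symmetric gradient. -/
def defEntry (u : V3 → V3) (i j : Fin 3) (x : V3) : ℝ :=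
  (pd j (fun y => u y i) x + pd i (fun y => u y j) x) / 2

/-- Entry `(dev def u)_{ij}`. -/
def devDefEntry (u : V3 → V3) (i j : Fin 3) (x : V3) : ℝ :=
  defEntry u i j x - (if i = j then (3:ℝ)⁻¹ * ∑ k, pd k (fun y => u y k) x else 0)

/-- Iterated partial derivative along a list of directions. -/
def pds : List (Fin 3) → (V3 → ℝ) → V3 → ℝ
  | [], f => f
  | i :: l, f => pd i (pds l f)

/-- Orthogonal projection of `v` onto the plane with unit normal `n`. -/
def projV (n v : V3) : V3 := v - (n ⬝ᵥ v) • n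

/-- Row-wise cross product `U × n`. -/
def rowCross (U : M3) (n : V3) : M3 := Matrix.of fun i => crossProduct (U i) n

/-- Row-wise projection `U Π`. -/
def rowProj (U : M3) (n : V3) : M3 := Matrix.of fun i => projV n (U i)

/-- Frobenius inner product. -/
def frob (A B : M3) : ℝ := ∑ i, ∑ j, A i j * B i j

/-- Projection matrix `Π = I - n nᵀ`. -/
def Pmat (n : V3) : M3 := 1 - vecMulVec n n

/-- `sym curl σ`. -/
def symCurl (σ : V3 → M3) (x : V3) : M3 := symPart (curlMat σ x)

/-- Tangential partial derivative `(Π∇)_i f`. -/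
def pdF (n : V3) (i : Fin 3) (f : V3 → ℝ) (x : V3) : ℝ :=
  pd i f x - n i * ∑ k, n k * pd k f x

/-- Row-wise surface gradient of a vector field. -/
def gradFMat (n : V3) (u : V3 → V3) (x : V3) : M3 :=
  Matrix.of fun i j => pdF n j (fun y => u y i) x

/-- Surface symmetric gradient `def_F u`. -/
def defF (n : V3) (u : V3 → V3) (x : V3) : M3 := symPart (gradFMat n u x)

/-- Normal derivative of a matrix field, entrywise. -/
def dnMat (n : V3) (τ : V3 → M3) (x : V3) : M3 :=
  Matrix.of fun i j => fderiv ℝ (fun y => τ y i j) x n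

/-- `tr₁ σ = sym(Π σ × n)`. -/
def tr1 (n : V3) (σ : V3 → M3) (x : V3) : M3 :=
  symPart (rowCross (Pmat n * σ x) n)

/-- `tr₃ σ = 2 def_F(n·(sym curl σ)Π) - Π ∂ₙ(sym curl σ) Π`. -/
def tr3 (n : V3) (σ : V3 → M3) (x : V3) : M3 :=
  (2:ℝ) • defF n (fun y => projV n (Matrix.vecMul n (symCurl σ y))) x -
    Pmat n * dnMat n (symCurl σ) x * Pmat n

/-- `div_F div_F U`. -/
def divFdivF (n : V3) (U : V3 → M3) (x : V3) : ℝ :=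
  ∑ i, ∑ j, pdF n i (fun y => pdF n j (fun z => U z i j) y) x

lemma contDiff_pd {f : V3 → ℝ} (hf : ContDiff ℝ (⊤ : ℕ∞) f) (j : Fin 3) :
    ContDiff ℝ (⊤ : ℕ∞) (pd j f) :=
  (hf.fderiv_right (by simp)).clm_apply contDiff_const

lemma pd_sub {f g : V3 → ℝ} (hf : ContDiff ℝ (⊤ : ℕ∞) f) (hg : ContDiff ℝ (⊤ : ℕ∞) g)
    (j : Fin 3) (x : V3) : pd j (fun y => f y - g y) x = pd j f x - pd j g x := by
  simp [pd, fderiv_fun_sub (hf.differentiable (by simp) x) (hg.differentiable (by simp) x)]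

lemma pd_add {f g : V3 → ℝ} (hf : ContDiff ℝ (⊤ : ℕ∞) f) (hg : ContDiff ℝ (⊤ : ℕ∞) g)
    (j : Fin 3) (x : V3) : pd j (fun y => f y + g y) x = pd j f x + pd j g x := by
  simp [pd, fderiv_fun_add (hf.differentiable (by simp) x) (hg.differentiable (by simp) x)]

lemma pd_cmul {f : V3 → ℝ} (hf : ContDiff ℝ (⊤ : ℕ∞) f) (c : ℝ)
    (j : Fin 3) (x : V3) : pd j (fun y => c * f y) x = c * pd j f x := by
  simp [pd, fderiv_const_mul (hf.differentiable (by simp) x) c]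

lemma pd_comm {f : V3 → ℝ} (hf : ContDiff ℝ (⊤ : ℕ∞) f) (i j : Fin 3) (x : V3) :
    pd i (pd j f) x = pd j (pd i f) x := by
  have h := (hf.contDiffAt (x := x)).isSymmSndFDerivAt (by norm_num; exact WithTop.coe_le_coe.2 (le_top : (2:ℕ∞) ≤ ⊤))
  have hd : ContDiff ℝ (⊤ : ℕ∞) (fderiv ℝ f) := hf.fderiv_right (by simp)
  have key : ∀ k l : Fin 3, pd k (pd l f) x =
      fderiv ℝ (fderiv ℝ f) x (Pi.single k 1) (Pi.single l 1) := by
    intro k l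
    have hh : pd l f = fun y => (fderiv ℝ f y) (Pi.single l 1) := rfl
    rw [pd, hh, fderiv_clm_apply (hd.differentiable (by simp) x)
      (differentiableAt_const _)]
    simp
  rw [key, key, h]

/-- `tr(inc(S⁻¹ U)) = -divdiv U` for smooth symmetric matrix fields. -/
theorem trace_inc_Sinv (U : V3 → M3)
    (hU : ∀ i j, ContDiff ℝ (⊤ : ℕ∞) fun x => U x i j)
    (hsym : ∀ x, (U x)ᵀ = U x) (x : V3) :
    (incMat (fun y => Sinv (U y)) x).trace = -divdiv U x := by
  simp only [incMat, curlMat, Sinv, curlVec, Matrix.trace, Matrix.diag, divdiv,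
    Matrix.sub_apply, Matrix.transpose_apply, Matrix.smul_apply, Matrix.one_apply,
    Fin.sum_univ_three, Matrix.of_apply, smul_eq_mul, Matrix.cons_val_zero,
    Matrix.cons_val_one, Matrix.head_cons, Matrix.cons_val_two, Matrix.tail_cons,
    if_true, if_false, mul_one, mul_zero, sub_zero, reduceIte, Fin.reduceEq, mul_one]
  simp (disch := solve_by_elim (maxDepth := 30)
    [hU, contDiff_const, ContDiff.sub, ContDiff.add, ContDiff.mul, contDiff_pd])
    only [pd_sub, pd_add, pd_cmul]
  have hs : ∀ k l : Fin 3, (fun z => U z k l) = (fun z => U z l k) := by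
    intro k l; funext z
    have h := congrFun (congrFun (hsym z) k) l
    rw [Matrix.transpose_apply] at h
    exact h.symm
  rw [hs 1 0, hs 2 0, hs 2 1]
  simp only [pd_comm (hU 0 0) 1 0 x, pd_comm (hU 0 0) 2 0 x, pd_comm (hU 0 0) 2 1 x,
    pd_comm (hU 0 1) 1 0 x, pd_comm (hU 0 1) 2 0 x, pd_comm (hU 0 1) 2 1 x,
    pd_comm (hU 0 2) 1 0 x, pd_comm (hU 0 2) 2 0 x, pd_comm (hU 0 2) 2 1 x,
    pd_comm (hU 1 1) 1 0 x, pd_comm (hU 1 1) 2 0 x, pd_comm (hU 1 1) 2 1 x,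
    pd_comm (hU 1 2) 1 0 x, pd_comm (hU 1 2) 2 0 x, pd_comm (hU 1 2) 2 1 x,
    pd_comm (hU 2 2) 1 0 x, pd_comm (hU 2 2) 2 0 x, pd_comm (hU 2 2) 2 1 x]
  ring
end
end

section
/- If U : R^3 → M is a smooth skew-symmetric matrix field, then inc(U) = 0, where inc(U) := curl(S⁻¹ curl U) with row-wise curl and S(V) = Vᵀ - tr(V)I. -/
open Matrix MeasureTheory

noncomputable section

lemma pd_neg (j : Fin 3) (f : V3 → ℝ) (x : V3) :
    pd j (fun y => -f y) x = -pd j f x := by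
  simp [pd, fderiv_neg]

lemma pd_zero (j : Fin 3) (x : V3) : pd j (fun _ => (0:ℝ)) x = 0 := by
  simp [pd]

/-- `inc U = 0` for smooth skew-symmetric matrix fields `U`. -/
theorem inc_skew_eq_zero (U : V3 → M3)
    (hU : ∀ i j, ContDiff ℝ (⊤ : ℕ∞) fun x => U x i j)
    (hskew : ∀ x, (U x)ᵀ = -U x) (x : V3) :
    incMat U x = 0 := by
  have hentry : ∀ y (i j : Fin 3), U y j i = -U y i j := by
    intro y i j
    have := congrFun (congrFun (hskew y) i) j
    simpa using this
  set u : V3 → V3 := fun y => ![U y 2 1, U y 0 2, U y 1 0] with hu_def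
  have pdiag : ∀ (i j : Fin 3) y, pd j (fun z => U z i i) y = 0 := by
    intro i j y
    have h : (fun z => U z i i) = fun _ => (0:ℝ) := by
      funext z; have := hentry z i i; linarith
    rw [h, pd_zero]
  have pent : ∀ (a b j : Fin 3) y,
      pd j (fun z => U z a b) y = -pd j (fun z => U z b a) y := by
    intro a b j y
    have h : (fun z => U z a b) = fun z => -U z b a := funext fun z => hentry z b a
    rw [h, pd_neg]
  have p12 := fun j y => pent 1 2 j y
  have p20 := fun j y => pent 2 0 j y
  have p01 := fun j y => pent 0 1 j y
  have key : ∀ (i k : Fin 3), (fun y => Sinv (curlMat U y) i k)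
      = fun y => -pd k (fun z => u z i) y := by
    intro i k
    funext y
    fin_cases i <;> fin_cases k <;>
      simp [Sinv, curlMat, curlVec, Matrix.trace, Matrix.diag, Fin.sum_univ_three,
        hu_def, Matrix.one_apply, pdiag, p12, p20, p01] <;> ring
  have hu : ∀ i : Fin 3, ContDiff ℝ (⊤ : ℕ∞) (fun z => u z i) := by
    intro i
    fin_cases i <;> simp [hu_def] <;> exact hU _ _
  have keyM : (fun y => Sinv (curlMat U y))
      = fun y => Matrix.of (fun a b => -pd b (fun z => u z a) y) := by
    funext y
    ext a b
    exact congrFun (key a b) y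
  ext i j
  have h12 := pd_comm (hu i) 1 2 x
  have h20 := pd_comm (hu i) 2 0 x
  have h01 := pd_comm (hu i) 0 1 x
  unfold incMat
  rw [keyM]
  fin_cases j <;>
    simp [curlMat, curlVec, pd_neg] <;>
    first | linarith [h12] | linarith [h20] | linarith [h01]
end
end

section
/- For each vector field v = (x·x)a - 2(a·x)x in R^3 (with a ∈ R^3 constant), curl v = -4 a × x. Consequently curl maps CK = {(x·x)a - 2(a·x)x + b×x + cx + d} onto the space RM = {b' × x + d' : b',d' ∈ R^3} of rigid motions, and the kernel of curl restricted to CK is RT = {c x + d : c ∈ R, d ∈ R^3}. -/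
open Matrix MeasureTheory

noncomputable section

def L (i : Fin 3) : V3 →L[ℝ] ℝ := ContinuousLinearMap.proj i

lemma hasL (i : Fin 3) (x : V3) : HasFDerivAt (fun y : V3 => y i) (L i) x :=
  (L i).hasFDerivAt

lemma pd_main (a q : V3) (c e : ℝ) (i j : Fin 3) (x : V3) :
    pd j (fun y => (y ⬝ᵥ y) * a i - 2 * (a ⬝ᵥ y) * y i + q ⬝ᵥ y + c * y i + e) x
      = 2 * x j * a i - (2 * (a ⬝ᵥ x) * (if i = j then 1 else 0) + 2 * a j * x i)
        + q j + c * (if i = j then 1 else 0) := by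
  have h1 : HasFDerivAt (fun y : V3 => y ⬝ᵥ y)
      (∑ k : Fin 3, (x k • L k + x k • L k)) x := by
    simp only [dotProduct]
    exact HasFDerivAt.fun_sum fun k _ => (hasL k x).mul (hasL k x)
  have h2 : HasFDerivAt (fun y : V3 => a ⬝ᵥ y) (∑ k : Fin 3, a k • L k) x := by
    simp only [dotProduct]
    exact HasFDerivAt.fun_sum fun k _ => ((hasL k x).const_mul (a k))
  have h3 : HasFDerivAt (fun y : V3 => q ⬝ᵥ y) (∑ k : Fin 3, q k • L k) x := by
    simp only [dotProduct]
    exact HasFDerivAt.fun_sum fun k _ => ((hasL k x).const_mul (q k))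
  have H := ((((h1.mul_const (a i)).fun_sub (((h2.const_mul 2)).fun_mul (hasL i x))).fun_add
      h3).fun_add ((hasL i x).const_mul c)).add_const e
  rw [pd, H.fderiv]
  simp [L, Pi.single_apply, Fin.sum_univ_three, dotProduct]
  fin_cases i <;> fin_cases j <;> simp <;> ring

lemma curl_general (a b d : V3) (c : ℝ) (x : V3) :
    curlVec (CKfield a b d c) x = (-4 : ℝ) • crossProduct a x + (2 : ℝ) • b := by
  have e0 : (fun y : V3 => CKfield a b d c y 0)
      = fun y => (y ⬝ᵥ y) * a 0 - 2 * (a ⬝ᵥ y) * y 0 + (![(0:ℝ), -b 2, b 1]) ⬝ᵥ y + c * y 0 + d 0 := by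
    funext y
    simp [CKfield, crossProduct, dotProduct, Fin.sum_univ_three,
      Matrix.vecHead, Matrix.vecTail]
    ring
  have e1 : (fun y : V3 => CKfield a b d c y 1)
      = fun y => (y ⬝ᵥ y) * a 1 - 2 * (a ⬝ᵥ y) * y 1 + (![b 2, (0:ℝ), -b 0]) ⬝ᵥ y + c * y 1 + d 1 := by
    funext y
    simp [CKfield, crossProduct, dotProduct, Fin.sum_univ_three,
      Matrix.vecHead, Matrix.vecTail]
    ring
  have e2 : (fun y : V3 => CKfield a b d c y 2)
      = fun y => (y ⬝ᵥ y) * a 2 - 2 * (a ⬝ᵥ y) * y 2 + (![-b 1, b 0, (0:ℝ)]) ⬝ᵥ y + c * y 2 + d 2 := by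
    funext y
    simp [CKfield, crossProduct, dotProduct, Fin.sum_univ_three,
      Matrix.vecHead, Matrix.vecTail]
    ring
  funext i
  fin_cases i <;>
    simp only [curlVec, e0, e1, e2, pd_main] <;>
    simp [crossProduct, dotProduct, Fin.sum_univ_three, Matrix.vecHead, Matrix.vecTail] <;>
    ring


/-- `curl((x·x)a - 2(a·x)x) = -4 a × x`; `curl` maps `CK` onto the
rigid motions `RM`, and its kernel in `CK` is `RT = {cx + d}`. -/
theorem curl_CK :
    (∀ a : V3, ∀ x : V3,
      curlVec (fun y => (y ⬝ᵥ y) • a - (2 * (a ⬝ᵥ y)) • y) x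
        = (-4 : ℝ) • crossProduct a x) ∧
    (∀ b' d' : V3, ∃ a b d : V3, ∃ c : ℝ,
      ∀ x, curlVec (CKfield a b d c) x = crossProduct b' x + d') ∧
    (∀ a b d : V3, ∀ c : ℝ, (∀ x, curlVec (CKfield a b d c) x = 0) →
      ∃ c' : ℝ, ∃ d'' : V3, ∀ x, CKfield a b d c x = c' • x + d'') := by
  refine ⟨fun a x => ?_, fun b' d' => ?_, fun a b d c h => ?_⟩
  · have hf : (fun y : V3 => (y ⬝ᵥ y) • a - (2 * (a ⬝ᵥ y)) • y) = CKfield a 0 0 0 := by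
      funext y
      simp [CKfield]
    rw [hf, curl_general]
    simp
  · refine ⟨(-(4:ℝ)⁻¹) • b', (2:ℝ)⁻¹ • d', 0, 0, fun x => ?_⟩
    rw [curl_general]
    simp [_root_.map_smul, smul_smul]
  · have H : ∀ x : V3, (-4 : ℝ) • crossProduct a x + (2 : ℝ) • b = 0 := by
      intro x; rw [← curl_general a b d c x]; exact h x
    have hb : b = 0 := by
      have := H 0
      simpa using this
    have ha : a = 0 := by
      have h1 := congrFun (H ![1,0,0]) 1
      have h2 := congrFun (H ![1,0,0]) 2
      have h3 := congrFun (H ![0,1,0]) 2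
      simp [crossProduct, hb, Matrix.vecHead, Matrix.vecTail] at h1 h2 h3
      funext k
      fin_cases k <;> simp [h1, h2, h3]
    exact ⟨c, d, fun x => by simp [CKfield, ha, hb]⟩
end
end

section
/- Let e be a line in R^3 with unit tangent t_e, and let F_+, F_- be two non-parallel planes containing e with unit normals n_+ and n_-. Then the five symmetric traceless 3×3 matrices sym(t_e n_+ᵀ), sym(t_e n_-ᵀ), dev(n_+ n_+ᵀ), dev(n_- n_-ᵀ), dev sym(n_+ n_-ᵀ) are linearly independent and hence form a basis of the 5-dimensional space of symmetric traceless matrices. -/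
open Matrix MeasureTheory

noncomputable section

namespace EdgeAux

lemma qsym (a b x y : V3) :
    a ⬝ᵥ (symPart (vecMulVec x y)) *ᵥ b
      = ((a ⬝ᵥ x) * (y ⬝ᵥ b) + (a ⬝ᵥ y) * (x ⬝ᵥ b)) / 2 := by
  simp [symPart, vecMulVec, mulVec, dotProduct, Matrix.transpose_apply, Fin.sum_univ_three]
  ring

lemma qdev (a b x y : V3) :
    a ⬝ᵥ (devPart (vecMulVec x y)) *ᵥ b
      = (a ⬝ᵥ x) * (y ⬝ᵥ b) - (x ⬝ᵥ y) * (a ⬝ᵥ b) / 3 := by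
  simp [devPart, vecMulVec, mulVec, dotProduct, Matrix.trace, Matrix.diag,
    Matrix.one_apply, Fin.sum_univ_three]
  ring

lemma qdevsym (a b x y : V3) :
    a ⬝ᵥ (devPart (symPart (vecMulVec x y))) *ᵥ b
      = ((a ⬝ᵥ x) * (y ⬝ᵥ b) + (a ⬝ᵥ y) * (x ⬝ᵥ b)) / 2 - (x ⬝ᵥ y) * (a ⬝ᵥ b) / 3 := by
  simp [devPart, symPart, vecMulVec, mulVec, dotProduct, Matrix.trace, Matrix.diag,
    Matrix.one_apply, Fin.sum_univ_three]
  ring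

lemma symPart_symm (U : M3) : (symPart U)ᵀ = symPart U := by
  simp [symPart, Matrix.transpose_add, Matrix.transpose_smul, add_comm]

lemma devPart_symm (U : M3) (h : Uᵀ = U) : (devPart U)ᵀ = devPart U := by
  simp [devPart, Matrix.transpose_sub, Matrix.transpose_smul, h]

lemma vmv_transpose (x y : V3) : (vecMulVec x y)ᵀ = vecMulVec y x := by
  ext i j; simp [vecMulVec, Matrix.transpose_apply, mul_comm]

lemma trace_symPart_vmv (x y : V3) : (symPart (vecMulVec x y)).trace = x ⬝ᵥ y := by
  simp [symPart, vecMulVec, Matrix.trace, Matrix.diag, dotProduct, Fin.sum_univ_three,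
    Matrix.transpose_apply]
  ring

lemma trace_devPart (U : M3) : (devPart U).trace = 0 := by
  simp [devPart, Matrix.trace_smul, Matrix.trace_one, Matrix.trace_sub, smul_eq_mul]
  ring

lemma qfive (a b : V3) (g : Fin 5 → ℝ) (N : Fin 5 → M3) :
    a ⬝ᵥ (∑ i, g i • N i) *ᵥ b = ∑ i, g i * (a ⬝ᵥ N i *ᵥ b) := by
  simp [Fin.sum_univ_five, Matrix.add_mulVec, Matrix.smul_mulVec,
    dotProduct_add, dotProduct_smul, smul_eq_mul]

lemma qswap (a b : V3) (A : M3) : a ⬝ᵥ A *ᵥ b = b ⬝ᵥ Aᵀ *ᵥ a := by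
  simp [dotProduct, mulVec, Fin.sum_univ_three, Matrix.transpose_apply]
  ring

lemma qlin2 (a x y : V3) (A : M3) (c s : ℝ) :
    a ⬝ᵥ A *ᵥ (c • x + s • y) = c * (a ⬝ᵥ A *ᵥ x) + s * (a ⬝ᵥ A *ᵥ y) := by
  simp [Matrix.mulVec_add, Matrix.mulVec_smul, dotProduct_add, dotProduct_smul, smul_eq_mul]

lemma qlin1 (x y b : V3) (A : M3) (c s : ℝ) :
    (c • x + s • y) ⬝ᵥ A *ᵥ b = c * (x ⬝ᵥ A *ᵥ b) + s * (y ⬝ᵥ A *ᵥ b) := by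
  simp [add_dotProduct, smul_dotProduct, smul_eq_mul]

set_option maxHeartbeats 2000000 in
lemma zero_of_q (t np nm : V3)
    (ht : t ⬝ᵥ t = 1) (hnp : np ⬝ᵥ np = 1) (hnm : nm ⬝ᵥ nm = 1)
    (htp : t ⬝ᵥ np = 0) (htm : t ⬝ᵥ nm = 0)
    (hlow : -1 < np ⬝ᵥ nm) (hhigh : np ⬝ᵥ nm < 1)
    (A : M3) (hAs : Aᵀ = A) (hAtr : A.trace = 0)
    (h1 : t ⬝ᵥ A *ᵥ np = 0) (h2 : t ⬝ᵥ A *ᵥ nm = 0) (h3 : np ⬝ᵥ A *ᵥ np = 0)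
    (h4 : nm ⬝ᵥ A *ᵥ nm = 0) (h5 : np ⬝ᵥ A *ᵥ nm = 0) : A = 0 := by
  have h9 : ∀ a b : V3, a ⬝ᵥ b = a 0 * b 0 + a 1 * b 1 + a 2 * b 2 := by
    intro a b; simp [dotProduct, Fin.sum_univ_three]
  set c : ℝ := np ⬝ᵥ nm with hc
  set u : V3 := ![t 1 * np 2 - t 2 * np 1, t 2 * np 0 - t 0 * np 2, t 0 * np 1 - t 1 * np 0] with hu
  have hut : t ⬝ᵥ u = 0 := by rw [h9]; simp [hu]; ring
  have hnu : np ⬝ᵥ u = 0 := by rw [h9]; simp [hu]; ring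
  have huu : u ⬝ᵥ u = 1 := by
    rw [h9] at ht hnp htp ⊢; simp [hu]; nlinarith [ht, hnp, htp]
  set s : ℝ := u ⬝ᵥ nm with hs
  -- frame matrix
  set P : M3 := Matrix.of ![t, np, u] with hP
  have hPPt : P * Pᵀ = 1 := by
    have ht' := ht; have hnp' := hnp; have htp' := htp
    have hut' := hut; have hnu' := hnu; have huu' := huu
    rw [h9] at ht' hnp' htp' hut' hnu' huu'
    ext i j
    rw [Matrix.mul_apply]
    simp only [Matrix.transpose_apply, Matrix.of_apply, hP]
    fin_cases i <;> fin_cases j <;>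
      simp [Fin.sum_univ_three, Matrix.one_apply] <;>
      linarith [ht', hnp', htp', hut', hnu', huu']
  have hPtP : Pᵀ * P = 1 := mul_eq_one_comm.mp hPPt
  -- decomposition of nm
  have hdecomp : nm = c • np + s • u := by
    have h2' : Pᵀ *ᵥ (P *ᵥ nm) = nm := by
      rw [Matrix.mulVec_mulVec, hPtP, Matrix.one_mulVec]
    have hPnm : P *ᵥ nm = ![0, c, s] := by
      funext i
      have hcnm : np ⬝ᵥ nm = c := rfl
      have hsnm : u ⬝ᵥ nm = s := rfl
      rw [h9] at htm hcnm hsnm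
      fin_cases i <;> simp [hP, mulVec, dotProduct, Fin.sum_univ_three] <;>
        linarith [htm, hcnm, hsnm]
    rw [← h2', hPnm]
    funext i
    rw [show (c • np + s • u) i = c * np i + s * u i from rfl]
    simp [mulVec, dotProduct, Fin.sum_univ_three, Matrix.transpose_apply, hP]
    ring
  -- c^2 + s^2 = 1
  have hcs : c ^ 2 + s ^ 2 = 1 := by
    have e : nm ⬝ᵥ nm = c * (c * (np ⬝ᵥ np) + s * (np ⬝ᵥ u)) + s * (c * (u ⬝ᵥ np) + s * (u ⬝ᵥ u)) := by
      nth_rewrite 1 [hdecomp]; nth_rewrite 1 [hdecomp]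
      rw [h9, h9, h9, h9, h9]
      simp only [show ∀ i, (c • np + s • u) i = c * np i + s * u i from fun _ => rfl]
      ring
    rw [hnm, hnp, hnu, huu, (dotProduct_comm u np).trans hnu] at e
    linear_combination -e
  have hs0 : s ≠ 0 := by
    intro h0
    have hfac : (c - 1) * (c + 1) = 0 := by rw [h0] at hcs; linear_combination hcs
    rcases mul_eq_zero.mp hfac with h | h
    · have : c = 1 := by linarith
      exact absurd this (ne_of_lt hhigh)
    · have : c = -1 := by linarith
      rw [this] at hlow; linarith
  -- derived q-values
  have hqsym : ∀ a b : V3, b ⬝ᵥ A *ᵥ a = a ⬝ᵥ A *ᵥ b := by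
    intro a b; rw [qswap, hAs]
  have hqtu : t ⬝ᵥ A *ᵥ u = 0 := by
    have := h2; rw [hdecomp, qlin2, h1] at this
    have : s * (t ⬝ᵥ A *ᵥ u) = 0 := by linarith
    exact (mul_eq_zero.mp this).resolve_left hs0
  have hqnu : np ⬝ᵥ A *ᵥ u = 0 := by
    have := h5; rw [hdecomp, qlin2, h3] at this
    have : s * (np ⬝ᵥ A *ᵥ u) = 0 := by linarith
    exact (mul_eq_zero.mp this).resolve_left hs0
  have hquu : u ⬝ᵥ A *ᵥ u = 0 := by
    have := h4
    rw [hdecomp, qlin1, qlin2, qlin2, h3, hqnu, hqsym np u, hqnu] at this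
    have h' : s * s * (u ⬝ᵥ A *ᵥ u) = 0 := by linarith
    have := mul_eq_zero.mp h'
    rcases this with h | h
    · exact absurd h (mul_ne_zero hs0 hs0)
    · exact h
  -- trace identity
  have hPentry : ∀ (i j : Fin 3), (P * A * Pᵀ) i j = (P i) ⬝ᵥ A *ᵥ (P j) := by
    intro i j
    simp [Matrix.mul_apply, mulVec, dotProduct, Fin.sum_univ_three, Matrix.transpose_apply]
    ring
  have htr : (P * A * Pᵀ).trace = 0 := by
    rw [Matrix.trace_mul_cycle, hPtP, Matrix.one_mul, hAtr]
  have hqtt : t ⬝ᵥ A *ᵥ t = 0 := by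
    have e : (P * A * Pᵀ).trace = t ⬝ᵥ A *ᵥ t + np ⬝ᵥ A *ᵥ np + u ⬝ᵥ A *ᵥ u := by
      rw [Matrix.trace_fin_three, hPentry, hPentry, hPentry]
      rfl
    rw [htr, h3, hquu] at e; linarith
  -- B = 0
  have hr1 : np ⬝ᵥ A *ᵥ t = 0 := (hqsym t np).trans h1
  have hr2 : u ⬝ᵥ A *ᵥ t = 0 := (hqsym t u).trans hqtu
  have hr3 : u ⬝ᵥ A *ᵥ np = 0 := (hqsym np u).trans hqnu
  have hq9 : ∀ a b : V3, a ⬝ᵥ A *ᵥ b =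
      a 0 * (A 0 0 * b 0 + A 0 1 * b 1 + A 0 2 * b 2) +
      a 1 * (A 1 0 * b 0 + A 1 1 * b 1 + A 1 2 * b 2) +
      a 2 * (A 2 0 * b 0 + A 2 1 * b 1 + A 2 2 * b 2) := by
    intro a b; simp [dotProduct, mulVec, Fin.sum_univ_three]
  have c1 := h1; have c2 := hqtu; have c3 := h3; have c4 := hqnu; have c5 := hquu
  have c6 := hqtt; have c7 := hr1; have c8 := hr2; have c9 := hr3
  rw [hq9] at c1 c2 c3 c4 c5 c6 c7 c8 c9
  have hB : P * A * Pᵀ = 0 := by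
    ext i j
    rw [hPentry, hq9]
    fin_cases i <;> fin_cases j <;> simp [hP] <;>
      first
        | linear_combination c1 | linear_combination c2 | linear_combination c3
        | linear_combination c4 | linear_combination c5 | linear_combination c6
        | linear_combination c7 | linear_combination c8 | linear_combination c9
  have : A = Pᵀ * (P * A * Pᵀ) * P := by
    rw [← Matrix.mul_assoc, ← Matrix.mul_assoc, hPtP, Matrix.one_mul,
      Matrix.mul_assoc, hPtP, Matrix.mul_one]
  rw [this, hB, Matrix.mul_zero, Matrix.zero_mul]


end EdgeAux

/-- edge basis of symmetric traceless matrices. -/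
theorem edge_basis (t np nm : V3)
    (ht : t ⬝ᵥ t = 1) (hnp : np ⬝ᵥ np = 1) (hnm : nm ⬝ᵥ nm = 1)
    (htp : t ⬝ᵥ np = 0) (htm : t ⬝ᵥ nm = 0)
    (hlow : -1 < np ⬝ᵥ nm) (hhigh : np ⬝ᵥ nm < 1) :
    LinearIndependent ℝ
      ![symPart (vecMulVec t np), symPart (vecMulVec t nm),
        devPart (vecMulVec np np), devPart (vecMulVec nm nm),
        devPart (symPart (vecMulVec np nm))] ∧
    ∀ A : M3, Aᵀ = A → A.trace = 0 →
      A ∈ Submodule.span ℝ (Set.range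
        ![symPart (vecMulVec t np), symPart (vecMulVec t nm),
          devPart (vecMulVec np np), devPart (vecMulVec nm nm),
          devPart (symPart (vecMulVec np nm))]) := by
  classical
  obtain ⟨c, hc⟩ : ∃ c, np ⬝ᵥ nm = c := ⟨_, rfl⟩
  rw [hc] at hlow hhigh
  have hpt : np ⬝ᵥ t = 0 := (dotProduct_comm np t).trans htp
  have hmt : nm ⬝ᵥ t = 0 := (dotProduct_comm nm t).trans htm
  have hmp : nm ⬝ᵥ np = c := (dotProduct_comm nm np).trans hc
  have hdne : (1:ℝ) - c^2 ≠ 0 := by nlinarith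
  set v : Fin 5 → M3 := ![symPart (vecMulVec t np), symPart (vecMulVec t nm),
      devPart (vecMulVec np np), devPart (vecMulVec nm nm),
      devPart (symPart (vecMulVec np nm))] with hv
  have hv0 : v 0 = symPart (vecMulVec t np) := rfl
  have hv1 : v 1 = symPart (vecMulVec t nm) := rfl
  have hv2 : v 2 = devPart (vecMulVec np np) := rfl
  have hv3 : v 3 = devPart (vecMulVec nm nm) := rfl
  have hv4 : v 4 = devPart (symPart (vecMulVec np nm)) := rfl
  have Eval : ∀ (g : Fin 5 → ℝ) (a b : V3),
      a ⬝ᵥ (∑ i, g i • v i) *ᵥ b =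
        g 0 * (((a ⬝ᵥ t) * (np ⬝ᵥ b) + (a ⬝ᵥ np) * (t ⬝ᵥ b)) / 2)
      + g 1 * (((a ⬝ᵥ t) * (nm ⬝ᵥ b) + (a ⬝ᵥ nm) * (t ⬝ᵥ b)) / 2)
      + g 2 * ((a ⬝ᵥ np) * (np ⬝ᵥ b) - (np ⬝ᵥ np) * (a ⬝ᵥ b) / 3)
      + g 3 * ((a ⬝ᵥ nm) * (nm ⬝ᵥ b) - (nm ⬝ᵥ nm) * (a ⬝ᵥ b) / 3)
      + g 4 * (((a ⬝ᵥ np) * (nm ⬝ᵥ b) + (a ⬝ᵥ nm) * (np ⬝ᵥ b)) / 2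
               - (np ⬝ᵥ nm) * (a ⬝ᵥ b) / 3) := by
    intro g a b
    rw [EdgeAux.qfive, Fin.sum_univ_five, hv0, hv1, hv2, hv3, hv4,
      EdgeAux.qsym, EdgeAux.qsym, EdgeAux.qdev, EdgeAux.qdev, EdgeAux.qdevsym]
  constructor
  · rw [Fintype.linearIndependent_iff]
    intro g hg
    have mkE : ∀ a b : V3, a ⬝ᵥ (∑ i, g i • v i) *ᵥ b = 0 := by
      intro a b; rw [hg]; simp
    have E1 := (mkE t np).symm.trans (Eval g t np)
    have E2 := (mkE t nm).symm.trans (Eval g t nm)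
    have E3 := (mkE np np).symm.trans (Eval g np np)
    have E4 := (mkE nm nm).symm.trans (Eval g nm nm)
    have E5 := (mkE np nm).symm.trans (Eval g np nm)
    simp only [ht, hnp, hnm, htp, htm, hpt, hmt, hmp, hc] at E1 E2 E3 E4 E5
    have hg0 : g 0 * (1 - c^2) = 0 := by linear_combination (-2:ℝ) * E1 + 2*c*E2
    have hg1 : g 1 * (1 - c^2) = 0 := by linear_combination (-2:ℝ) * E2 + 2*c*E1
    have hg2 : g 2 * ((1 - c^2)^3) = 0 := by
      linear_combination (-(2:ℝ)*(1-c^2)) * E3 + (-(1-c^4)) * E4 + (-4*c*(c^2-1)) * E5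
    have hg3 : g 3 * ((1 - c^2)^3) = 0 := by
      linear_combination (-(1:ℝ)+c^4) * E3 + (-2*(1-c^2)) * E4 + (-4*c*(c^2-1)) * E5
    have hg4 : g 4 * ((1 - c^2)^3) = 0 := by
      linear_combination (-(4:ℝ)*c*(c^2-1)) * E3 + (-4*c*(c^2-1)) * E4
        + (-(2+4*c^2-6*c^4)) * E5
    have hd3 : ((1:ℝ) - c^2)^3 ≠ 0 := pow_ne_zero _ hdne
    intro i
    fin_cases i
    · exact (mul_eq_zero.mp hg0).resolve_right hdne
    · exact (mul_eq_zero.mp hg1).resolve_right hdne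
    · exact (mul_eq_zero.mp hg2).resolve_right hd3
    · exact (mul_eq_zero.mp hg3).resolve_right hd3
    · exact (mul_eq_zero.mp hg4).resolve_right hd3
  · intro A hAs hAtr
    rw [Submodule.mem_span_range_iff_exists_fun]
    obtain ⟨w1, hw1⟩ : ∃ w, t ⬝ᵥ A *ᵥ np = w := ⟨_, rfl⟩
    obtain ⟨w2, hw2⟩ : ∃ w, t ⬝ᵥ A *ᵥ nm = w := ⟨_, rfl⟩
    obtain ⟨w3, hw3⟩ : ∃ w, np ⬝ᵥ A *ᵥ np = w := ⟨_, rfl⟩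
    obtain ⟨w4, hw4⟩ : ∃ w, nm ⬝ᵥ A *ᵥ nm = w := ⟨_, rfl⟩
    obtain ⟨w5, hw5⟩ : ∃ w, np ⬝ᵥ A *ᵥ nm = w := ⟨_, rfl⟩
    set g : Fin 5 → ℝ := ![2*(w1 - c*w2)/(1-c^2), 2*(w2 - c*w1)/(1-c^2),
      (2*w3 + (1+c^2)*w4 - 4*c*w5)/(1-c^2)^2,
      ((1+c^2)*w3 + 2*w4 - 4*c*w5)/(1-c^2)^2,
      (-4*c*w3 - 4*c*w4 + 2*(1+3*c^2)*w5)/(1-c^2)^2] with hgdef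
    have hg0 : g 0 = 2*(w1 - c*w2)/(1-c^2) := rfl
    have hg1 : g 1 = 2*(w2 - c*w1)/(1-c^2) := rfl
    have hg2 : g 2 = (2*w3 + (1+c^2)*w4 - 4*c*w5)/(1-c^2)^2 := rfl
    have hg3 : g 3 = ((1+c^2)*w3 + 2*w4 - 4*c*w5)/(1-c^2)^2 := rfl
    have hg4 : g 4 = (-4*c*w3 - 4*c*w4 + 2*(1+3*c^2)*w5)/(1-c^2)^2 := rfl
    refine ⟨g, ?_⟩
    set B : M3 := ∑ i, g i • v i with hB
    have hBsym : Bᵀ = B := by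
      rw [hB, Fin.sum_univ_five]
      have h0 : (v 0)ᵀ = v 0 := by rw [hv0]; exact EdgeAux.symPart_symm _
      have h1 : (v 1)ᵀ = v 1 := by rw [hv1]; exact EdgeAux.symPart_symm _
      have h2 : (v 2)ᵀ = v 2 := by
        rw [hv2]; exact EdgeAux.devPart_symm _ (EdgeAux.vmv_transpose np np)
      have h3 : (v 3)ᵀ = v 3 := by
        rw [hv3]; exact EdgeAux.devPart_symm _ (EdgeAux.vmv_transpose nm nm)
      have h4 : (v 4)ᵀ = v 4 := by
        rw [hv4]; exact EdgeAux.devPart_symm _ (EdgeAux.symPart_symm _)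
      simp [Matrix.transpose_add, Matrix.transpose_smul, h0, h1, h2, h3, h4]
    have hBtr : B.trace = 0 := by
      rw [hB, Fin.sum_univ_five]
      simp [Matrix.trace_add, Matrix.trace_smul, hv0, hv1, hv2, hv3, hv4,
        EdgeAux.trace_symPart_vmv, EdgeAux.trace_devPart, htp, htm, smul_eq_mul]
    have hq : ∀ a b : V3, a ⬝ᵥ (A - B) *ᵥ b = (a ⬝ᵥ A *ᵥ b) - (a ⬝ᵥ B *ᵥ b) := by
      intro a b; rw [Matrix.sub_mulVec, dotProduct_sub]
    have hBval := fun a b => Eval g a b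
    have hq1 : t ⬝ᵥ (A - B) *ᵥ np = 0 := by
      rw [hq, hw1, hB, Eval]
      simp only [ht, hnp, hnm, htp, htm, hpt, hmt, hmp, hc, hg0, hg1, hg2, hg3, hg4]
      field_simp
      ring
    have hq2 : t ⬝ᵥ (A - B) *ᵥ nm = 0 := by
      rw [hq, hw2, hB, Eval]
      simp only [ht, hnp, hnm, htp, htm, hpt, hmt, hmp, hc, hg0, hg1, hg2, hg3, hg4]
      field_simp
      ring
    have hq3 : np ⬝ᵥ (A - B) *ᵥ np = 0 := by
      rw [hq, hw3, hB, Eval]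
      simp only [ht, hnp, hnm, htp, htm, hpt, hmt, hmp, hc, hg0, hg1, hg2, hg3, hg4]
      field_simp
      ring
    have hq4 : nm ⬝ᵥ (A - B) *ᵥ nm = 0 := by
      rw [hq, hw4, hB, Eval]
      simp only [ht, hnp, hnm, htp, htm, hpt, hmt, hmp, hc, hg0, hg1, hg2, hg3, hg4]
      field_simp
      ring
    have hq5 : np ⬝ᵥ (A - B) *ᵥ nm = 0 := by
      rw [hq, hw5, hB, Eval]
      simp only [ht, hnp, hnm, htp, htm, hpt, hmt, hmp, hc, hg0, hg1, hg2, hg3, hg4]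
      field_simp
      ring
    have hz := EdgeAux.zero_of_q t np nm ht hnp hnm htp htm
      (by rw [hc]; exact hlow) (by rw [hc]; exact hhigh)
      (A - B)
      (by rw [Matrix.transpose_sub, hAs, hBsym])
      (by rw [Matrix.trace_sub, hAtr, hBtr, sub_zero])
      hq1 hq2 hq3 hq4 hq5
    exact (sub_eq_zero.mp hz).symm
end
end

section
/- A conformal Killing field v ∈ CK = {(x·x)a - 2(a·x)x + b×x + cx + d : a,b,d ∈ R^3, c ∈ R} on a tetrahedron K is uniquely determined by the 10 degrees of freedom: ∫_e t_e · curl v for each of the 6 edges e of K, and ∫_F v·n for each of the 4 faces F of K. That is, if all these integrals vanish then v = 0. -/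
open Matrix MeasureTheory

noncomputable section

-- ===== auxiliary lemmas =====

private def prjCK (k : Fin 3) : V3 →L[ℝ] ℝ := ContinuousLinearMap.proj k

private lemma hyCK (k : Fin 3) (x : V3) :
    HasFDerivAt (fun y : V3 => y k) (prjCK k) x :=
  hasFDerivAt_apply (𝕜 := ℝ) k x

private lemma pd_polyCK (a b d : V3) (c : ℝ) (i j : Fin 3) (x : V3) :
    pd j (fun y : V3 => (∑ k, y k * y k) * a i - (2 * ∑ k, a k * y k) * y i
      + (∑ k, mskw b i k * y k) + c * y i + d i) x
    = 2 * x j * a i - 2 * a j * x i - 2 * (∑ k, a k * x k) * (if i = j then 1 else 0)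
      + mskw b i j + c * (if i = j then 1 else 0) := by
  have h1 : HasFDerivAt (fun y : V3 => ∑ k, y k * y k)
      (∑ k, (x k • prjCK k + x k • prjCK k)) x :=
    HasFDerivAt.fun_sum (fun k _ => (hyCK k x).fun_mul (hyCK k x))
  have h2 : HasFDerivAt (fun y : V3 => ∑ k, a k * y k)
      (∑ k, a k • prjCK k) x := by
    have := HasFDerivAt.fun_sum (fun k (_ : k ∈ Finset.univ) => (hyCK k x).const_mul (a k))
    simpa using this
  have h3 : HasFDerivAt (fun y : V3 => ∑ k, mskw b i k * y k)
      (∑ k, mskw b i k • prjCK k) x := by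
    have := HasFDerivAt.fun_sum (fun k (_ : k ∈ Finset.univ) => (hyCK k x).const_mul (mskw b i k))
    simpa using this
  have H := ((((h1.mul_const (a i)).fun_sub ((h2.const_mul 2).fun_mul (hyCK i x))).fun_add h3).fun_add
      ((hyCK i x).const_mul c)).add_const (d i)
  rw [pd, H.fderiv]
  simp [prjCK, Pi.single_apply, Fin.sum_univ_three, dotProduct]
  fin_cases i <;> fin_cases j <;> simp <;> ring

private lemma CK_applyCK (a b d : V3) (c : ℝ) (i : Fin 3) :
    (fun y => CKfield a b d c y i)
      = fun y : V3 => (∑ k, y k * y k) * a i - (2 * ∑ k, a k * y k) * y i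
        + (∑ k, mskw b i k * y k) + c * y i + d i := by
  funext y
  simp only [CKfield, Pi.add_apply, Pi.sub_apply, Pi.smul_apply, smul_eq_mul, dotProduct]
  fin_cases i <;>
    simp [cross_apply, mskw, Fin.sum_univ_three] <;> ring

private lemma pd_CKlem (a b d : V3) (c : ℝ) (i j : Fin 3) (x : V3) :
    pd j (fun y => CKfield a b d c y i) x
    = 2 * x j * a i - 2 * a j * x i - 2 * (∑ k, a k * x k) * (if i = j then 1 else 0)
      + mskw b i j + c * (if i = j then 1 else 0) := by
  rw [CK_applyCK, pd_polyCK]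

private lemma curl_CKlem (a b d : V3) (c : ℝ) (x : V3) :
    curlVec (CKfield a b d c) x = fun k => 2 * b k - 4 * crossProduct a x k := by
  funext k
  fin_cases k <;>
    simp [curlVec, pd_CKlem, mskw, cross_apply, Fin.sum_univ_three] <;> ring

/-- Cramer-type identity. -/
private lemma triple_ident (w1 w2 w3 u : V3) :
    (w1 ⬝ᵥ crossProduct w2 w3) • u
      = (u ⬝ᵥ crossProduct w2 w3) • w1 + (u ⬝ᵥ crossProduct w3 w1) • w2
        + (u ⬝ᵥ crossProduct w1 w2) • w3 := by
  funext k
  fin_cases k <;>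
    simp [cross_apply, dotProduct, Fin.sum_univ_three] <;> ring

private lemma recip_ident (w1 w2 w3 u : V3) :
    (w1 ⬝ᵥ crossProduct w2 w3) • u
      = (u ⬝ᵥ w1) • crossProduct w2 w3 + (u ⬝ᵥ w2) • crossProduct w3 w1
        + (u ⬝ᵥ w3) • crossProduct w1 w2 := by
  funext k
  fin_cases k <;>
    simp [cross_apply, dotProduct, Fin.sum_univ_three] <;> ring

private lemma ortho_cross (w1 w2 w3 u : V3) (hD : w1 ⬝ᵥ crossProduct w2 w3 ≠ 0)
    (h12 : u ⬝ᵥ crossProduct w1 w2 = 0) (h23 : u ⬝ᵥ crossProduct w2 w3 = 0)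
    (h13 : u ⬝ᵥ crossProduct w1 w3 = 0) : u = 0 := by
  have h31 : u ⬝ᵥ crossProduct w3 w1 = 0 := by
    rw [← cross_anticomm w1 w3, dotProduct_neg, h13, neg_zero]
  have h := triple_ident w1 w2 w3 u
  rw [h12, h23, h31] at h
  simp only [zero_smul, add_zero, zero_add] at h
  exact (smul_eq_zero.mp h).resolve_left hD

private lemma ortho_basis (w1 w2 w3 u : V3) (hD : w1 ⬝ᵥ crossProduct w2 w3 ≠ 0)
    (h1 : u ⬝ᵥ w1 = 0) (h2 : u ⬝ᵥ w2 = 0) (h3 : u ⬝ᵥ w3 = 0) : u = 0 := by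
  have h := recip_ident w1 w2 w3 u
  rw [h1, h2, h3] at h
  simp only [zero_smul, add_zero, zero_add] at h
  exact (smul_eq_zero.mp h).resolve_left hD

private lemma Tvol_ne : (volume {q : ℝ × ℝ | 0 ≤ q.1 ∧ 0 ≤ q.2 ∧ q.1 + q.2 ≤ 1}).toReal ≠ 0 := by
  have hsub1 : (Set.Ioo (0:ℝ) 2⁻¹) ×ˢ (Set.Ioo (0:ℝ) 2⁻¹)
      ⊆ {q : ℝ × ℝ | 0 ≤ q.1 ∧ 0 ≤ q.2 ∧ q.1 + q.2 ≤ 1} := by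
    rintro ⟨x, y⟩ hq
    simp only [Set.mem_prod, Set.mem_Ioo] at hq
    obtain ⟨⟨hx0, hx1⟩, hy0, hy1⟩ := hq
    refine ⟨hx0.le, hy0.le, ?_⟩
    simp only
    linarith
  have hsub2 : {q : ℝ × ℝ | 0 ≤ q.1 ∧ 0 ≤ q.2 ∧ q.1 + q.2 ≤ 1}
      ⊆ (Set.Icc (0:ℝ) 1) ×ˢ (Set.Icc (0:ℝ) 1) := by
    rintro ⟨x, y⟩ hq
    obtain ⟨h1, h2, h3⟩ := hq
    simp only at h1 h2 h3
    simp only [Set.mem_prod, Set.mem_Icc]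
    exact ⟨⟨h1, by linarith⟩, h2, by linarith⟩
  have hprod1 : volume ((Set.Ioo (0:ℝ) 2⁻¹) ×ˢ (Set.Ioo (0:ℝ) 2⁻¹))
      = ENNReal.ofReal 2⁻¹ * ENNReal.ofReal 2⁻¹ := by
    rw [Measure.volume_eq_prod, Measure.prod_prod, Real.volume_Ioo, sub_zero]
  have hprod2 : volume ((Set.Icc (0:ℝ) 1) ×ˢ (Set.Icc (0:ℝ) 1)) = 1 := by
    rw [Measure.volume_eq_prod, Measure.prod_prod, Real.volume_Icc, sub_zero]
    simp
  have hpos : 0 < volume {q : ℝ × ℝ | 0 ≤ q.1 ∧ 0 ≤ q.2 ∧ q.1 + q.2 ≤ 1} := by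
    refine lt_of_lt_of_le ?_ (measure_mono hsub1)
    rw [hprod1]
    exact ENNReal.mul_pos (by simp) (by simp)
  have hne : volume {q : ℝ × ℝ | 0 ≤ q.1 ∧ 0 ≤ q.2 ∧ q.1 + q.2 ≤ 1} ≠ ⊤ := by
    refine ne_top_of_le_ne_top ?_ (measure_mono hsub2)
    rw [hprod2]; exact ENNReal.one_ne_top
  exact ENNReal.toReal_ne_zero.mpr ⟨hpos.ne', hne⟩

/-- a conformal Killing field on a tetrahedron is determined by
the edge DOFs `∫_e t_e · curl v` and the face DOFs `∫_F v · n`: if they all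
vanish, the field is zero. -/
theorem CK_unisolvent (p : Fin 4 → V3) (hp : AffineIndependent ℝ p)
    (a b d : V3) (c : ℝ)
    (hedge : ∀ i j : Fin 4, i ≠ j →
      (∫ s in (0:ℝ)..1,
        (p j - p i) ⬝ᵥ curlVec (CKfield a b d c) (p i + s • (p j - p i))) = 0)
    (hface : ∀ i j l : Fin 4, i ≠ j → i ≠ l → j ≠ l →
      (∫ q in {q : ℝ × ℝ | 0 ≤ q.1 ∧ 0 ≤ q.2 ∧ q.1 + q.2 ≤ 1},
        CKfield a b d c (p i + q.1 • (p j - p i) + q.2 • (p l - p i)) ⬝ᵥ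
          crossProduct (p j - p i) (p l - p i)) = 0) :
    ∀ x, CKfield a b d c x = 0 := by
  -- determinant nonzero
  classical
  have h0 := (affineIndependent_iff_linearIndependent_vsub ℝ p 0).mp hp
  have einj : Function.Injective (fun k : Fin 3 => (⟨Fin.succ k, Fin.succ_ne_zero k⟩ : {x : Fin 4 // x ≠ 0})) := by
    intro k1 k2 h
    exact Fin.succ_injective _ (congrArg Subtype.val h)
  have hli : LinearIndependent ℝ (fun k : Fin 3 => p (Fin.succ k) - p 0) := by
    have := h0.comp _ einj
    simpa [vsub_eq_sub, Function.comp_def] using this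
  set M : Matrix (Fin 3) (Fin 3) ℝ := Matrix.of (fun k j => (p (Fin.succ k) - p 0) j) with hM
  have hliM : LinearIndependent ℝ (fun i => M i) := hli
  have hdet : M.det ≠ 0 :=
    IsUnit.ne_zero ((Matrix.isUnit_iff_isUnit_det M).mp
      (Matrix.linearIndependent_rows_iff_isUnit.mp hliM))
  have hD : (p 1 - p 0) ⬝ᵥ crossProduct (p 2 - p 0) (p 3 - p 0) ≠ 0 := by
    have hMD : M.det = (p 1 - p 0) ⬝ᵥ crossProduct (p 2 - p 0) (p 3 - p 0) := by
      rw [Matrix.det_fin_three]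
      simp [hM, cross_apply, dotProduct, Fin.sum_univ_three,
        show (Fin.succ 0 : Fin 4) = 1 by decide, show (Fin.succ 1 : Fin 4) = 2 by decide,
        show (Fin.succ 2 : Fin 4) = 3 by decide]
      ring
    rwa [hMD] at hdet
  -- edge conditions
  have hE : ∀ i j : Fin 4, i ≠ j →
      (p j - p i) ⬝ᵥ (fun k => 2 * b k - 4 * crossProduct a (p i) k) = 0 := by
    intro i j hij
    have h := hedge i j hij
    have hconst : ∀ s : ℝ,
        (p j - p i) ⬝ᵥ curlVec (CKfield a b d c) (p i + s • (p j - p i))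
          = (p j - p i) ⬝ᵥ (fun k => 2 * b k - 4 * crossProduct a (p i) k) := by
      intro s
      rw [curl_CKlem]
      simp only [dotProduct, Fin.sum_univ_three, cross_apply, Pi.add_apply, Pi.sub_apply,
        Pi.smul_apply, smul_eq_mul]
      simp
      ring
    simp only [hconst] at h
    rwa [intervalIntegral.integral_const, sub_zero, one_smul] at h
  -- a = 0
  have ha12 : a ⬝ᵥ crossProduct (p 1 - p 0) (p 2 - p 0) = 0 := by
    have h1 := hE 0 1 (by decide); have h2 := hE 1 2 (by decide); have h3 := hE 2 0 (by decide)
    simp only [dotProduct, Fin.sum_univ_three, cross_apply, Pi.sub_apply] at h1 h2 h3 ⊢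
    simp at h1 h2 h3 ⊢
    linear_combination (-(1:ℝ)/4) * h1 + (-(1:ℝ)/4) * h2 + (-(1:ℝ)/4) * h3
  have ha23 : a ⬝ᵥ crossProduct (p 2 - p 0) (p 3 - p 0) = 0 := by
    have h1 := hE 0 2 (by decide); have h2 := hE 2 3 (by decide); have h3 := hE 3 0 (by decide)
    simp only [dotProduct, Fin.sum_univ_three, cross_apply, Pi.sub_apply] at h1 h2 h3 ⊢
    simp at h1 h2 h3 ⊢
    linear_combination (-(1:ℝ)/4) * h1 + (-(1:ℝ)/4) * h2 + (-(1:ℝ)/4) * h3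
  have ha13 : a ⬝ᵥ crossProduct (p 1 - p 0) (p 3 - p 0) = 0 := by
    have h1 := hE 0 1 (by decide); have h2 := hE 1 3 (by decide); have h3 := hE 3 0 (by decide)
    simp only [dotProduct, Fin.sum_univ_three, cross_apply, Pi.sub_apply] at h1 h2 h3 ⊢
    simp at h1 h2 h3 ⊢
    linear_combination (-(1:ℝ)/4) * h1 + (-(1:ℝ)/4) * h2 + (-(1:ℝ)/4) * h3
  have ha : a = 0 := ortho_cross (p 1 - p 0) (p 2 - p 0) (p 3 - p 0) a hD ha12 ha23 ha13
  subst ha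
  -- b = 0
  have hb1 : b ⬝ᵥ (p 1 - p 0) = 0 := by
    have h1 := hE 0 1 (by decide)
    simp only [dotProduct, Fin.sum_univ_three, cross_apply, Pi.sub_apply] at h1 ⊢
    simp at h1 ⊢
    linear_combination ((1:ℝ)/2) * h1
  have hb2 : b ⬝ᵥ (p 2 - p 0) = 0 := by
    have h1 := hE 0 2 (by decide)
    simp only [dotProduct, Fin.sum_univ_three, cross_apply, Pi.sub_apply] at h1 ⊢
    simp at h1 ⊢
    linear_combination ((1:ℝ)/2) * h1
  have hb3 : b ⬝ᵥ (p 3 - p 0) = 0 := by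
    have h1 := hE 0 3 (by decide)
    simp only [dotProduct, Fin.sum_univ_three, cross_apply, Pi.sub_apply] at h1 ⊢
    simp at h1 ⊢
    linear_combination ((1:ℝ)/2) * h1
  have hb : b = 0 := ortho_basis (p 1 - p 0) (p 2 - p 0) (p 3 - p 0) b hD hb1 hb2 hb3
  subst hb
  -- face conditions
  have hF : ∀ i j l : Fin 4, i ≠ j → i ≠ l → j ≠ l →
      (c • p i + d) ⬝ᵥ crossProduct (p j - p i) (p l - p i) = 0 := by
    intro i j l hij hil hjl
    have h := hface i j l hij hil hjl
    have hpt : ∀ q : ℝ × ℝ,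
        CKfield 0 0 d c (p i + q.1 • (p j - p i) + q.2 • (p l - p i)) ⬝ᵥ
          crossProduct (p j - p i) (p l - p i)
        = (c • p i + d) ⬝ᵥ crossProduct (p j - p i) (p l - p i) := by
      intro q
      simp only [CKfield, dotProduct, Fin.sum_univ_three, cross_apply, Pi.add_apply,
        Pi.sub_apply, Pi.smul_apply, smul_eq_mul]
      simp
      ring
    simp only [hpt] at h
    rw [MeasureTheory.setIntegral_const, smul_eq_mul] at h
    exact (mul_eq_zero.mp h).resolve_left Tvol_ne
  have hu : c • p 0 + d = 0 :=
    ortho_cross (p 1 - p 0) (p 2 - p 0) (p 3 - p 0) (c • p 0 + d) hD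
      (hF 0 1 2 (by decide) (by decide) (by decide))
      (hF 0 2 3 (by decide) (by decide) (by decide))
      (hF 0 1 3 (by decide) (by decide) (by decide))
  have hd : d = -(c • p 0) := eq_neg_of_add_eq_zero_right hu
  subst hd
  have hcD : c * ((p 1 - p 0) ⬝ᵥ crossProduct (p 2 - p 0) (p 3 - p 0)) = 0 := by
    have h123 := hF 1 2 3 (by decide) (by decide) (by decide)
    simp only [dotProduct, Fin.sum_univ_three, cross_apply, Pi.add_apply, Pi.sub_apply,
      Pi.neg_apply, Pi.smul_apply, smul_eq_mul] at h123 ⊢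
    simp [-mul_eq_zero] at h123 ⊢
    linear_combination h123
  have hc : c = 0 := (mul_eq_zero.mp hcD).resolve_right hD
  subst hc
  intro x
  funext k
  fin_cases k <;>
    simp [CKfield, cross_apply, dotProduct]
end
end
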